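/- arXiv:2401.05523 — 2 statements merged into one kernel-verified Lean document; each statement's English description precedes it below -/
import Mathlib

section
/- If A is a critical independent set of a graph G and X = A ∪ N(A), then μ(G) = μ(G[X]) + μ(G - X); in particular, every maximum matching of G[X] extends to a maximum matching of G. -/
open SimpleGraph

variable {V : Type*}

/-- A set of vertices is independent: no two of its vertices are adjacent. -/
def IsIndep (G : SimpleGraph V) (s : Set V) : Prop :=
  s.Pairwise fun a b => ¬ G.Adj a b

/-- The independence number α(G). -/
noncomputable def alphaNum (G : SimpleGraph V) : ℕ :=
  sSup {n | ∃ s : Set V, IsIndep G s ∧ s.ncard = n}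

/-- The matching number μ(G). -/
noncomputable def muNum (G : SimpleGraph V) : ℕ :=
  sSup {n | ∃ M : SimpleGraph.Subgraph G, M.IsMatching ∧ M.edgeSet.ncard = n}

/-- The neighborhood N(A) of a set of vertices. -/
def nbhd (G : SimpleGraph V) (A : Set V) : Set V := {v | ∃ a ∈ A, G.Adj a v}

/-- The difference d(A) = |A| - |N(A)| of a set of vertices. -/
noncomputable def diffSet (G : SimpleGraph V) (A : Set V) : ℤ :=
  (A.ncard : ℤ) - (nbhd G A).ncard

/-- The critical difference d(G). -/
noncomputable def critDiff (G : SimpleGraph V) : ℤ :=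
  sSup {d | ∃ I : Set V, IsIndep G I ∧ diffSet G I = d}

/-- A critical independent set: an independent set attaining the critical difference. -/
def IsCriticalIndep (G : SimpleGraph V) (A : Set V) : Prop :=
  IsIndep G A ∧ diffSet G A = critDiff G

/-- ker(G): the intersection of all critical independent sets. -/
noncomputable def kerSet (G : SimpleGraph V) : Set V :=
  ⋂₀ {A | IsCriticalIndep G A}

/-- A maximum independent set. -/
noncomputable def IsMaxIndep (G : SimpleGraph V) (S : Set V) : Prop :=
  IsIndep G S ∧ S.ncard = alphaNum G

/-- core(G): the intersection of all maximum independent sets. -/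
noncomputable def coreSet (G : SimpleGraph V) : Set V :=
  ⋂₀ {S | IsMaxIndep G S}

/-- A König–Egerváry graph: α(G) + μ(G) = n(G). -/
def KonigEgervary (G : SimpleGraph V) : Prop :=
  alphaNum G + muNum G = Nat.card V

/-!
Write `X = A ∪ N(A)`. Maximum matchings of `G[X]` and `G - X` have disjoint vertex sets, so
`μ(G[X]) + μ(G - X) ≤ μ(G)`. Conversely, every edge meeting `X` meets `N(A)` (all neighbours of `A`
lie in `N(A)`), so a maximum matching of `G` has at most `|N(A)|` edges meeting `X` and the rest
lie in `G - X`: `μ(G) ≤ |N(A)| + μ(G - X)`. Criticality of `A` yields Hall's condition for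
matching `N(A)` into `A`: if `S ⊆ N(A)` had fewer than `|S|` neighbours in `A`, deleting them from
`A` would leave an independent set of larger difference. Hence `|N(A)| ≤ μ(G[X])`, all these
inequalities are equalities, and a maximum matching of `G[X]` together with one of `G - X` is a
maximum matching of `G`.
-/

open Function

section MatchingNumber

variable {W : Type*} [Finite W]

lemma bddAbove_ncard_edgeSet_isMatching (H : SimpleGraph W) :
    BddAbove {n | ∃ M : H.Subgraph, M.IsMatching ∧ M.edgeSet.ncard = n} := by
  refine ⟨Nat.card (Sym2 W), ?_⟩
  rintro n ⟨M, -, rfl⟩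
  exact Set.ncard_le_card _

lemma SimpleGraph.Subgraph.IsMatching.ncard_edgeSet_le_muNum {H : SimpleGraph W}
    {M : H.Subgraph} (hM : M.IsMatching) : M.edgeSet.ncard ≤ muNum H :=
  le_csSup (bddAbove_ncard_edgeSet_isMatching H) ⟨M, hM, rfl⟩

lemma exists_isMatching_ncard_edgeSet_eq_muNum (H : SimpleGraph W) :
    ∃ M : H.Subgraph, M.IsMatching ∧ M.edgeSet.ncard = muNum H := by
  have hzero : 0 ∈ {n | ∃ M : H.Subgraph, M.IsMatching ∧ M.edgeSet.ncard = n} :=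
    ⟨⊥, fun _ hv => hv.elim, by simp⟩
  exact Nat.sSup_mem ⟨0, hzero⟩ (bddAbove_ncard_edgeSet_isMatching H)

end MatchingNumber

namespace SimpleGraph.Subgraph

variable {G : SimpleGraph V} {M : G.Subgraph}

def toInduce (M : G.Subgraph) (s : Set V) : (G.induce s).Subgraph where
  verts := {v | ∃ w : s, M.Adj v w}
  Adj u v := M.Adj u v
  adj_sub h := M.adj_sub h
  edge_vert h := ⟨_, h⟩
  symm := ⟨fun _ _ h => M.adj_symm h⟩

lemma IsMatching.toInduce (hM : M.IsMatching) (s : Set V) : (M.toInduce s).IsMatching := by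
  rintro v ⟨w, hw⟩
  refine ⟨w, hw, fun y hy => Subtype.ext ?_⟩
  exact hM.eq_of_adj_left hy hw

lemma ncard_edgeSet_toInduce (M : G.Subgraph) (s : Set V) :
    (M.toInduce s).edgeSet.ncard = {e ∈ M.edgeSet | ∀ v ∈ e, v ∈ s}.ncard := by
  have himage : Sym2.map (↑) '' (M.toInduce s).edgeSet = {e ∈ M.edgeSet | ∀ v ∈ e, v ∈ s} := by
    ext e
    constructor
    · rintro ⟨e', he', rfl⟩
      induction e' with
      | _ u v => exact Set.mem_sep he' (by simp)
    · rintro ⟨he, hs⟩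
      induction e with
      | _ u v =>
        refine ⟨s(⟨u, hs u (Sym2.mem_mk_left u v)⟩, ⟨v, hs v (Sym2.mem_mk_right u v)⟩), he, ?_⟩
        simp
  rw [← himage, Set.ncard_image_of_injective _ (Sym2.map.injective Subtype.val_injective)]

lemma IsMatching.ncard_edges_meeting_le [Finite V] (hM : M.IsMatching) (T : Set V) :
    {e ∈ M.edgeSet | ∃ v ∈ T, v ∈ e}.ncard ≤ T.ncard := by
  have hcover : {e ∈ M.edgeSet | ∃ v ∈ T, v ∈ e} ⊆
      (fun v : M.verts => (hM.toEdge v : Sym2 V)) '' {v | ↑v ∈ T} := by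
    rintro e ⟨he, v, hvT, hve⟩
    refine ⟨⟨v, M.mem_verts_of_mem_edge he hve⟩, hvT, ?_⟩
    induction e with
    | _ a b =>
      rcases Sym2.mem_iff.mp hve with rfl | rfl
      · simp [hM.toEdge_eq_of_adj he]
      · simp [hM.toEdge_eq_of_adj (M.adj_symm he), Sym2.eq_swap]
  calc {e ∈ M.edgeSet | ∃ v ∈ T, v ∈ e}.ncard
      ≤ {v : M.verts | ↑v ∈ T}.ncard := (Set.ncard_le_ncard hcover).trans (Set.ncard_image_le)
    _ = (Subtype.val '' {v : M.verts | ↑v ∈ T}).ncard :=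
      (Set.ncard_image_of_injective _ Subtype.val_injective).symm
    _ ≤ T.ncard := Set.ncard_le_ncard (by rintro _ ⟨v, hv, rfl⟩; exact hv)

end SimpleGraph.Subgraph

section Matchings

variable {G : SimpleGraph V}

lemma muNum_le_ncard_add_muNum_induce [Finite V] (T s : Set V)
    (hT : ∀ u v, G.Adj u v → u ∉ s → u ∈ T ∨ v ∈ T) :
    muNum G ≤ T.ncard + muNum (G.induce s) := by
  obtain ⟨M, hM, hMmax⟩ := exists_isMatching_ncard_edgeSet_eq_muNum G
  have hsplit : M.edgeSet ⊆
      {e ∈ M.edgeSet | ∃ v ∈ T, v ∈ e} ∪ {e ∈ M.edgeSet | ∀ v ∈ e, v ∈ s} := by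
    intro e he
    by_contra hout
    simp only [Set.mem_union, Set.mem_sep_iff, he, true_and, not_or, not_exists, not_and,
      not_forall] at hout
    obtain ⟨hTe, w, hwe, hws⟩ := hout
    induction e with
    | _ a b =>
      rcases Sym2.mem_iff.mp hwe with rfl | rfl
      · rcases hT w b (M.adj_sub he) hws with h | h
        exacts [hTe w h (Sym2.mem_mk_left w b), hTe b h (Sym2.mem_mk_right w b)]
      · rcases hT w a (M.adj_sub (M.adj_symm he)) hws with h | h
        exacts [hTe w h (Sym2.mem_mk_right a w), hTe a h (Sym2.mem_mk_left a w)]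
  calc muNum G = M.edgeSet.ncard := hMmax.symm
    _ ≤ {e ∈ M.edgeSet | ∃ v ∈ T, v ∈ e}.ncard + {e ∈ M.edgeSet | ∀ v ∈ e, v ∈ s}.ncard :=
      (Set.ncard_le_ncard hsplit).trans (Set.ncard_union_le _ _)
    _ ≤ T.ncard + muNum (G.induce s) := by
      rw [← Subgraph.ncard_edgeSet_toInduce]
      exact Nat.add_le_add (hM.ncard_edges_meeting_le T) (hM.toInduce s).ncard_edgeSet_le_muNum

lemma exists_isMatching_of_isMatching_induce_compl [Finite V] {s : Set V}
    {M₁ : (G.induce s).Subgraph} (h₁ : M₁.IsMatching)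
    {M₂ : (G.induce sᶜ).Subgraph} (h₂ : M₂.IsMatching) :
    ∃ M : G.Subgraph, M.IsMatching ∧
      M.edgeSet.ncard = M₁.edgeSet.ncard + M₂.edgeSet.ncard ∧
      Sym2.map Subtype.val '' M₁.edgeSet ⊆ M.edgeSet := by
  let f₁ : G.induce s →g G := (Embedding.induce s).toHom
  let f₂ : G.induce sᶜ →g G := (Embedding.induce sᶜ).toHom
  have hverts₁ : (M₁.map f₁).verts ⊆ s := by rintro _ ⟨v, -, rfl⟩; exact v.2
  have hverts₂ : (M₂.map f₂).verts ⊆ sᶜ := by rintro _ ⟨v, -, rfl⟩; exact v.2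
  have hm₁ := h₁.map f₁ Subtype.val_injective
  have hm₂ := h₂.map f₂ Subtype.val_injective
  have hdisj : Disjoint (M₁.map f₁).support (M₂.map f₂).support := by
    rw [hm₁.support_eq_verts, hm₂.support_eq_verts]
    exact Set.disjoint_of_subset hverts₁ hverts₂ disjoint_compl_right
  have hedisj : Disjoint (M₁.map f₁).edgeSet (M₂.map f₂).edgeSet := by
    refine Set.disjoint_left.mpr fun e he₁ he₂ => ?_
    induction e with
    | _ a b =>
      exact hverts₂ ((M₂.map f₂).edge_vert he₂) (hverts₁ ((M₁.map f₁).edge_vert he₁))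
  refine ⟨M₁.map f₁ ⊔ M₂.map f₂, hm₁.sup hm₂ hdisj, ?_, ?_⟩
  · rw [Subgraph.edgeSet_sup, Set.ncard_union_eq hedisj, Subgraph.edgeSet_map,
      Subgraph.edgeSet_map, Set.ncard_image_of_injective _ (Sym2.map.injective (f := f₁)
      Subtype.val_injective), Set.ncard_image_of_injective _ (Sym2.map.injective (f := f₂)
      Subtype.val_injective)]
  · rw [Subgraph.edgeSet_sup, Subgraph.edgeSet_map]
    exact Set.subset_union_left

lemma muNum_induce_add_muNum_induce_compl_le [Finite V] (G : SimpleGraph V) (s : Set V) :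
    muNum (G.induce s) + muNum (G.induce sᶜ) ≤ muNum G := by
  obtain ⟨M₁, h₁, hM₁⟩ := exists_isMatching_ncard_edgeSet_eq_muNum (G.induce s)
  obtain ⟨M₂, h₂, hM₂⟩ := exists_isMatching_ncard_edgeSet_eq_muNum (G.induce sᶜ)
  obtain ⟨M, hM, hcard, -⟩ := exists_isMatching_of_isMatching_induce_compl h₁ h₂
  rw [← hM₁, ← hM₂, ← hcard]
  exact hM.ncard_edgeSet_le_muNum

lemma exists_isMatching_of_injective {s : Set V} (f : s → V) (hf : Injective f)
    (hfs : ∀ v, f v ∉ s) (hadj : ∀ v : s, G.Adj v (f v)) :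
    ∃ M : G.Subgraph, M.IsMatching ∧ M.edgeSet.ncard = s.ncard ∧
      ∀ e ∈ M.edgeSet, ∀ v ∈ e, v ∈ s ∪ Set.range f := by
  have hedge : Injective fun v : s => s(↑v, f v) := by
    intro v w h
    rcases Sym2.eq_iff.mp h with ⟨h, -⟩ | ⟨h, -⟩
    · exact Subtype.ext h
    · exact absurd (h ▸ v.2) (hfs w)
  have hedgeSet : (⨆ v, G.subgraphOfAdj (hadj v)).edgeSet = Set.range fun v : s => s(↑v, f v) := by
    rw [Subgraph.edgeSet_iSup, Set.range_eq_iUnion]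
    simp only [edgeSet_subgraphOfAdj]
  refine ⟨⨆ v, G.subgraphOfAdj (hadj v), .iSup (fun v => .subgraphOfAdj _) ?_, ?_, ?_⟩
  · intro v w hvw
    simp only [support_subgraphOfAdj, Set.disjoint_insert_left, Set.disjoint_insert_right,
      Set.disjoint_singleton, Set.mem_insert_iff, Set.mem_singleton_iff]
    refine ⟨not_or.mpr ⟨fun h => hvw (Subtype.ext h.symm), fun h => hfs v (h ▸ w.2)⟩,
      fun h => hfs w (h ▸ v.2), hf.ne hvw⟩
  · rw [hedgeSet, Set.ncard_range_of_injective hedge, Nat.card_coe_set_eq]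
  · rw [hedgeSet]
    rintro _ ⟨v, rfl⟩ u hu
    rcases Sym2.mem_iff.mp hu with rfl | rfl
    exacts [Or.inl v.2, Or.inr ⟨v, rfl⟩]

end Matchings

section Critical

variable {G : SimpleGraph V} {A : Set V}

lemma IsIndep.notMem_nbhd (hA : IsIndep G A) {a : V} (ha : a ∈ A) : a ∉ nbhd G A := by
  rintro ⟨b, hb, hba⟩
  rcases eq_or_ne b a with rfl | hne
  · exact G.irrefl hba
  · exact hA hb ha hne hba

lemma IsIndep.diffSet_le_critDiff [Finite V] (hA : IsIndep G A) : diffSet G A ≤ critDiff G := by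
  refine le_csSup ⟨Nat.card V, ?_⟩ ⟨A, hA, rfl⟩
  rintro _ ⟨I, -, rfl⟩
  have := Set.ncard_le_card I
  unfold diffSet
  omega

variable [Finite V]

lemma IsCriticalIndep.ncard_le_ncard_inter_nbhd (hA : IsCriticalIndep G A) {S : Set V}
    (hS : S ⊆ nbhd G A) : S.ncard ≤ (A ∩ nbhd G S).ncard := by
  obtain ⟨hInd, hcrit⟩ := hA
  have hnbhd : nbhd G (A \ nbhd G S) ⊆ nbhd G A \ S := by
    rintro x ⟨a, ha, hax⟩
    exact ⟨⟨a, ha.1, hax⟩, fun hxS => ha.2 ⟨x, hxS, hax.symm⟩⟩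
  have hle : diffSet G (A \ nbhd G S) ≤ diffSet G A :=
    hcrit ▸ IsIndep.diffSet_le_critDiff (A := A \ nbhd G S) (hInd.mono Set.sdiff_subset)
  have hsplitA := Set.ncard_inter_add_ncard_sdiff_eq_ncard A (nbhd G S)
  have hsplitN := Set.ncard_sdiff_add_ncard_of_subset hS
  have hmono := Set.ncard_le_ncard hnbhd
  unfold diffSet at hle
  omega

lemma IsCriticalIndep.exists_injective (hA : IsCriticalIndep G A) :
    ∃ f : nbhd G A → V, Injective f ∧ ∀ v, f v ∈ A ∧ G.Adj v (f v) := by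
  classical
  have := Fintype.ofFinite A
  obtain ⟨f, hf, hadj⟩ := (Fintype.all_card_le_filter_rel_iff_exists_injective
    fun (v : nbhd G A) (a : A) => G.Adj v a).mp fun S => by
      have himage : Subtype.val '' (({a : A | ∃ v ∈ S, G.Adj v a} : Finset A) : Set A) =
          A ∩ nbhd G (Subtype.val '' (S : Set (nbhd G A))) := by
        ext x
        simp only [Finset.coe_filter, Finset.mem_univ, true_and, Set.mem_image, Set.mem_ofPred_eq,
          Subtype.exists, exists_and_right, exists_eq_right, Set.mem_inter_iff, nbhd]
        tauto
      have := hA.ncard_le_ncard_inter_nbhd (S := Subtype.val '' (S : Set (nbhd G A)))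
        (by rintro _ ⟨v, -, rfl⟩; exact v.2)
      rwa [← himage, Set.ncard_image_of_injective _ Subtype.val_injective,
        Set.ncard_image_of_injective _ Subtype.val_injective, Set.ncard_coe_finset,
        Set.ncard_coe_finset] at this
  exact ⟨Subtype.val ∘ f, Subtype.val_injective.comp hf, fun v => ⟨(f v).2, hadj v⟩⟩

lemma IsCriticalIndep.ncard_nbhd_le_muNum_induce (hA : IsCriticalIndep G A) :
    (nbhd G A).ncard ≤ muNum (G.induce (A ∪ nbhd G A)) := by
  obtain ⟨f, hf, hfA⟩ := hA.exists_injective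
  obtain ⟨M, hM, hcard, hverts⟩ := exists_isMatching_of_injective f hf
    (fun v => hA.1.notMem_nbhd (hfA v).1) (fun v => (hfA v).2)
  have hinside : {e ∈ M.edgeSet | ∀ v ∈ e, v ∈ A ∪ nbhd G A} = M.edgeSet := by
    refine Set.sep_eq_self_iff_mem_true.mpr fun e he v hv => ?_
    rcases hverts e he v hv with h | ⟨w, rfl⟩
    exacts [Or.inr h, Or.inl (hfA w).1]
  calc (nbhd G A).ncard = (M.toInduce (A ∪ nbhd G A)).edgeSet.ncard := by
        rw [Subgraph.ncard_edgeSet_toInduce, hinside, hcard]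
    _ ≤ muNum (G.induce (A ∪ nbhd G A)) := (hM.toInduce _).ncard_edgeSet_le_muNum

end Critical

lemma muNum_le_ncard_nbhd_add_muNum_induce_compl [Finite V] (G : SimpleGraph V) (A : Set V) :
    muNum G ≤ (nbhd G A).ncard + muNum (G.induce (A ∪ nbhd G A)ᶜ) := by
  refine muNum_le_ncard_add_muNum_induce _ _ fun u v huv hu => ?_
  rcases Set.notMem_compl_iff.mp hu with hA | hN
  · exact Or.inr ⟨u, hA, huv⟩
  · exact Or.inl hN

theorem stmt_8 [Fintype V] (G : SimpleGraph V) (A : Set V)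
    (hA : IsCriticalIndep G A) :
    muNum G = muNum (G.induce (A ∪ nbhd G A)) + muNum (G.induce (A ∪ nbhd G A)ᶜ) ∧
    ∀ M : SimpleGraph.Subgraph (G.induce (A ∪ nbhd G A)),
      M.IsMatching → M.edgeSet.ncard = muNum (G.induce (A ∪ nbhd G A)) →
      ∃ M' : SimpleGraph.Subgraph G, M'.IsMatching ∧ M'.edgeSet.ncard = muNum G ∧
        Sym2.map (Subtype.val) '' M.edgeSet ⊆ M'.edgeSet := by
  set X := A ∪ nbhd G A
  have hμ : muNum G = muNum (G.induce X) + muNum (G.induce Xᶜ) :=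
    le_antisymm
      ((muNum_le_ncard_nbhd_add_muNum_induce_compl G A).trans
        (Nat.add_le_add_right hA.ncard_nbhd_le_muNum_induce _))
      (muNum_induce_add_muNum_induce_compl_le G X)
  refine ⟨hμ, fun M hM hMmax => ?_⟩
  obtain ⟨M₂, hM₂, hM₂max⟩ := exists_isMatching_ncard_edgeSet_eq_muNum (G.induce Xᶜ)
  obtain ⟨M', hM', hcard, hsub⟩ := exists_isMatching_of_isMatching_induce_compl hM hM₂
  exact ⟨M', hM', by rw [hcard, hMmax, hM₂max, hμ], hsub⟩
end

section
/- Let G be a graph and v ∈ core(G) - ker(G). Then ker(G) is a critical independent set of G - v, and consequently d(G - v) = d(G). -/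
open SimpleGraph

variable {V : Type*}

section Aux

set_option linter.unusedSectionVars false

variable [Fintype V] (G : SimpleGraph V)

lemma ncard_diff_add_inter' (s t : Set V) : (s \ t).ncard + (s ∩ t).ncard = s.ncard := by
  rw [← Set.ncard_union_eq (Set.disjoint_left.mpr fun a ha hb => ha.2 hb.2)
    (Set.toFinite _) (Set.toFinite _), Set.diff_union_inter]

lemma indep_mono' {s t : Set V} (h : s ⊆ t) (ht : IsIndep G t) : IsIndep G s := ht.mono h

lemma nbhd_mono' {s t : Set V} (h : s ⊆ t) : nbhd G s ⊆ nbhd G t := by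
  rintro w ⟨a, ha, hadj⟩; exact ⟨a, h ha, hadj⟩

lemma indep_notMem_nbhd {A : Set V} (hA : IsIndep G A) {a : V} (ha : a ∈ A) :
    a ∉ nbhd G A := by
  rintro ⟨b, hbA, hadj⟩
  exact hA hbA ha (fun h => (h ▸ hadj).ne rfl) hadj

lemma diff_set_nonempty : {d | ∃ I : Set V, IsIndep G I ∧ diffSet G I = d}.Nonempty :=
  ⟨diffSet G ∅, ∅, fun a ha => absurd ha (Set.notMem_empty a), rfl⟩

lemma diff_set_finite : {d | ∃ I : Set V, IsIndep G I ∧ diffSet G I = d}.Finite := by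
  have : {d | ∃ I : Set V, IsIndep G I ∧ diffSet G I = d}
      = diffSet G '' {I | IsIndep G I} := by
    ext d; simp only [Set.mem_image, Set.mem_setOf_eq]
  rw [this]
  exact (Set.toFinite _).image _

lemma diff_le_critDiff {I : Set V} (h : IsIndep G I) : diffSet G I ≤ critDiff G :=
  le_csSup (diff_set_finite G).bddAbove ⟨I, h, rfl⟩

lemma exists_critical : ∃ A, IsCriticalIndep G A := by
  obtain ⟨I, hI, hd⟩ := (diff_set_nonempty G).csSup_mem (diff_set_finite G)
  exact ⟨I, hI, hd⟩

/-- Any set (not necessarily independent) has difference at most the critical difference. -/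
lemma diffSet_le_critDiff (X : Set V) : diffSet G X ≤ critDiff G := by
  set N := nbhd G X with hN
  set I := X \ N with hI
  have hindep : IsIndep G I := by
    intro a ha b hb hne hadj
    exact hb.2 ⟨a, ha.1, hadj⟩
  have hsub : nbhd G I ⊆ N \ X := by
    rintro w ⟨a, ha, hadj⟩
    exact ⟨⟨a, ha.1, hadj⟩, fun hwX => ha.2 ⟨w, hwX, hadj.symm⟩⟩
  have h1 : (I.ncard : ℤ) + (X ∩ N).ncard = X.ncard := by
    exact_mod_cast congrArg (Nat.cast (R := ℤ)) (ncard_diff_add_inter' X N)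
  have h2 : ((nbhd G I).ncard : ℤ) ≤ (N \ X).ncard := by
    exact_mod_cast Set.ncard_le_ncard hsub (Set.toFinite _)
  have h3 : ((N \ X).ncard : ℤ) + (N ∩ X).ncard = N.ncard := by
    exact_mod_cast congrArg (Nat.cast (R := ℤ)) (ncard_diff_add_inter' N X)
  have h4 : (X ∩ N).ncard = (N ∩ X).ncard := by rw [Set.inter_comm]
  have h5 : diffSet G X ≤ diffSet G I := by
    have h4' : ((X ∩ N).ncard : ℤ) = (N ∩ X).ncard := by rw [Set.inter_comm]
    show (X.ncard : ℤ) - N.ncard ≤ (I.ncard : ℤ) - (nbhd G I).ncard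
    linarith
  exact h5.trans (diff_le_critDiff G hindep)

lemma nbhd_union' (A B : Set V) : nbhd G (A ∪ B) = nbhd G A ∪ nbhd G B := by
  ext w
  constructor
  · rintro ⟨a, ha | ha, hadj⟩
    · exact Or.inl ⟨a, ha, hadj⟩
    · exact Or.inr ⟨a, ha, hadj⟩
  · rintro (⟨a, ha, hadj⟩ | ⟨a, ha, hadj⟩)
    · exact ⟨a, Or.inl ha, hadj⟩
    · exact ⟨a, Or.inr ha, hadj⟩

lemma nbhd_inter_subset' (A B : Set V) : nbhd G (A ∩ B) ⊆ nbhd G A ∩ nbhd G B := by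
  rintro w ⟨a, ha, hadj⟩
  exact ⟨⟨a, ha.1, hadj⟩, ⟨a, ha.2, hadj⟩⟩

/-- Intersection of two critical independent sets is critical. -/
lemma critical_inter' {A B : Set V} (hA : IsCriticalIndep G A) (hB : IsCriticalIndep G B) :
    IsCriticalIndep G (A ∩ B) := by
  have hind : IsIndep G (A ∩ B) := indep_mono' G Set.inter_subset_left hA.1
  refine ⟨hind, le_antisymm (diff_le_critDiff G hind) ?_⟩
  have hc : ((A ∩ B).ncard : ℤ) + (A ∪ B).ncard = A.ncard + B.ncard := by
    exact_mod_cast congrArg (Nat.cast (R := ℤ))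
      (Set.ncard_inter_add_ncard_union A B (Set.toFinite _) (Set.toFinite _))
  have hn : ((nbhd G A ∩ nbhd G B).ncard : ℤ) + (nbhd G A ∪ nbhd G B).ncard
      = (nbhd G A).ncard + (nbhd G B).ncard := by
    exact_mod_cast congrArg (Nat.cast (R := ℤ))
      (Set.ncard_inter_add_ncard_union _ _ (Set.toFinite _) (Set.toFinite _))
  have h1 : ((nbhd G (A ∩ B)).ncard : ℤ) ≤ (nbhd G A ∩ nbhd G B).ncard := by
    exact_mod_cast Set.ncard_le_ncard (nbhd_inter_subset' G A B) (Set.toFinite _)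
  have h2 : ((nbhd G (A ∪ B)).ncard : ℤ) = (nbhd G A ∪ nbhd G B).ncard := by
    rw [nbhd_union']
  have e1 : (A.ncard : ℤ) - (nbhd G A).ncard = critDiff G := hA.2
  have e2 : (B.ncard : ℤ) - (nbhd G B).ncard = critDiff G := hB.2
  have e3 : ((A ∪ B).ncard : ℤ) - (nbhd G (A ∪ B)).ncard ≤ critDiff G :=
    diffSet_le_critDiff G (A ∪ B)
  show critDiff G ≤ ((A ∩ B).ncard : ℤ) - (nbhd G (A ∩ B)).ncard
  linarith

/-- ker(G) is a critical independent set. -/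
lemma ker_critical : IsCriticalIndep G (kerSet G) := by
  have hne : {n | ∃ A, IsCriticalIndep G A ∧ A.ncard = n}.Nonempty := by
    obtain ⟨A, hA⟩ := exists_critical G
    exact ⟨A.ncard, A, hA, rfl⟩
  obtain ⟨M, hM, hMn⟩ := Nat.sInf_mem hne
  have hmin : ∀ A, IsCriticalIndep G A → M ⊆ A := by
    intro A hA
    have hcrit := critical_inter' G hM hA
    have hle : sInf {n | ∃ A, IsCriticalIndep G A ∧ A.ncard = n} ≤ (M ∩ A).ncard :=
      Nat.sInf_le ⟨M ∩ A, hcrit, rfl⟩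
    have heq : M ∩ A = M :=
      Set.eq_of_subset_of_ncard_le Set.inter_subset_left (by omega) (Set.toFinite _)
    intro x hx
    rw [← heq] at hx
    exact hx.2
  have hker : kerSet G = M :=
    subset_antisymm (Set.sInter_subset_of_mem hM)
      (Set.subset_sInter fun A hA => hmin A hA)
  rw [hker]; exact hM

lemma alpha_bdd : BddAbove {n | ∃ s : Set V, IsIndep G s ∧ s.ncard = n} := by
  refine ⟨Fintype.card V, ?_⟩
  rintro n ⟨s, _, rfl⟩
  calc s.ncard ≤ (Set.univ : Set V).ncard := Set.ncard_le_ncard (Set.subset_univ s)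
    _ = Fintype.card V := by rw [Set.ncard_univ, Nat.card_eq_fintype_card]

lemma ncard_le_alpha {s : Set V} (h : IsIndep G s) : s.ncard ≤ alphaNum G :=
  le_csSup (alpha_bdd G) ⟨s, h, rfl⟩

lemma exists_max_indep : ∃ S, IsMaxIndep G S := by
  have hne : {n | ∃ s : Set V, IsIndep G s ∧ s.ncard = n}.Nonempty :=
    ⟨(∅ : Set V).ncard, ∅, fun a ha => absurd ha (Set.notMem_empty a), rfl⟩
  obtain ⟨s, hs, hn⟩ := Nat.sSup_mem hne (alpha_bdd G)
  exact ⟨s, hs, hn⟩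

/-- Every critical independent set is contained in a maximum independent set. -/
lemma critical_subset_max {A : Set V} (hA : IsCriticalIndep G A) :
    ∃ S, IsMaxIndep G S ∧ A ⊆ S := by
  obtain ⟨s, hsI, hsα⟩ := exists_max_indep G
  set N := nbhd G A with hNdef
  set S' := (A \ s) ∪ (s \ N) with hS'
  have hAS' : A ⊆ S' := by
    intro a ha
    by_cases has : a ∈ s
    · exact Or.inr ⟨has, fun hn => indep_notMem_nbhd G hA.1 ha hn⟩
    · exact Or.inl ⟨ha, has⟩
  have hindep : IsIndep G S' := by
    rintro x (hx | hx) y (hy | hy) hne hadj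
    · exact hA.1 hx.1 hy.1 hne hadj
    · exact hy.2 ⟨x, hx.1, hadj⟩
    · exact hx.2 ⟨y, hy.1, hadj.symm⟩
    · exact hsI hx.1 hy.1 hne hadj
  -- counting
  have hd1 : ((A \ s).ncard : ℤ) + (A ∩ s).ncard = A.ncard := by
    exact_mod_cast congrArg (Nat.cast (R := ℤ)) (ncard_diff_add_inter' A s)
  have hd2 : ((s \ N).ncard : ℤ) + (s ∩ N).ncard = s.ncard := by
    exact_mod_cast congrArg (Nat.cast (R := ℤ)) (ncard_diff_add_inter' s N)
  have hAsIndep : IsIndep G (A ∩ s) := indep_mono' G Set.inter_subset_left hA.1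
  have hAsle : ((A ∩ s).ncard : ℤ) - (nbhd G (A ∩ s)).ncard ≤ critDiff G :=
    diff_le_critDiff G hAsIndep
  have hAcrit : (A.ncard : ℤ) - N.ncard = critDiff G := hA.2
  -- nbhd (A ∩ s) and s ∩ N are disjoint subsets of N
  have hdisj : Disjoint (nbhd G (A ∩ s)) (s ∩ N) := by
    rw [Set.disjoint_left]
    rintro w ⟨a, ha, hadj⟩ hw
    exact hsI ha.2 hw.1 (hadj.ne) hadj
  have hsubN : nbhd G (A ∩ s) ∪ (s ∩ N) ⊆ N := by
    rintro w (⟨a, ha, hadj⟩ | hw)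
    · exact ⟨a, ha.1, hadj⟩
    · exact hw.2
  have hNbound : ((nbhd G (A ∩ s)).ncard : ℤ) + (s ∩ N).ncard ≤ N.ncard := by
    have := Set.ncard_le_ncard hsubN (Set.toFinite _)
    rw [Set.ncard_union_eq hdisj (Set.toFinite _) (Set.toFinite _)] at this
    exact_mod_cast this
  have hScard : S'.ncard = (A \ s).ncard + (s \ N).ncard := by
    rw [hS', Set.ncard_union_eq (Set.disjoint_left.mpr fun a ha hb => ha.2 hb.1)
      (Set.toFinite _) (Set.toFinite _)]
  have hge : (s.ncard : ℤ) ≤ S'.ncard := by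
    rw [hScard]
    push_cast
    linarith
  have hle : S'.ncard ≤ alphaNum G := ncard_le_alpha G hindep
  have : S'.ncard = alphaNum G := by
    rw [hsα] at hge
    exact_mod_cast le_antisymm hle (by exact_mod_cast hge)
  exact ⟨S', ⟨hindep, this⟩, hAS'⟩

/-- A vertex of core(G) is never in the neighborhood of a critical independent set. -/
lemma core_not_nbhd {w : V} (hw : w ∈ coreSet G) {A : Set V}
    (hA : IsCriticalIndep G A) : w ∉ nbhd G A := by
  obtain ⟨S, hS, hAS⟩ := critical_subset_max G hA
  rintro ⟨a, haA, hadj⟩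
  exact hS.1 (hAS haA) (hw S hS) hadj.ne hadj

end Aux

section Induce

variable (G : SimpleGraph V) (s : Set V)

lemma indep_induce_iff (I : Set s) :
    IsIndep (G.induce s) I ↔ IsIndep G (Subtype.val '' I) := by
  constructor
  · rintro h x ⟨a, ha, rfl⟩ y ⟨b, hb, rfl⟩ hne hadj
    exact h ha hb (fun hab => hne (congrArg _ hab)) hadj
  · intro h a ha b hb hne hadj
    exact h ⟨a, ha, rfl⟩ ⟨b, hb, rfl⟩ (fun hab => hne (Subtype.ext hab)) hadj

lemma nbhd_induce (I : Set s) :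
    nbhd (G.induce s) I = Subtype.val ⁻¹' (nbhd G (Subtype.val '' I)) := by
  ext w
  constructor
  · rintro ⟨a, ha, hadj⟩
    exact ⟨a, ⟨a, ha, rfl⟩, hadj⟩
  · rintro ⟨x, ⟨a, ha, rfl⟩, hadj⟩
    exact ⟨a, ha, hadj⟩

end Induce

theorem stmt_12 [Fintype V] (G : SimpleGraph V) (v : V)
    (hv : v ∈ coreSet G \ kerSet G) :
    IsCriticalIndep (G.induce ({v}ᶜ : Set V)) (Subtype.val ⁻¹' kerSet G) ∧
    critDiff (G.induce ({v}ᶜ : Set V)) = critDiff G := by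
  classical
  obtain ⟨hvcore, hvker⟩ := hv
  set s : Set V := ({v}ᶜ : Set V) with hs
  set H := G.induce s with hH
  haveI : Fintype ↥s := Fintype.ofFinite _
  have hKc : IsCriticalIndep G (kerSet G) := ker_critical G
  have hvN : v ∉ nbhd G (kerSet G) := core_not_nbhd G hvcore hKc
  -- image of the preimage of ker
  have himg : Subtype.val '' (Subtype.val ⁻¹' kerSet G : Set s) = kerSet G := by
    rw [Subtype.image_preimage_coe]
    ext x
    simp only [hs, Set.mem_inter_iff, Set.mem_compl_iff, Set.mem_singleton_iff]
    exact ⟨fun h => h.2, fun h => ⟨fun hx => hvker (hx ▸ h), h⟩⟩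
  -- ncard equalities for preimage sets
  have hdiffH : ∀ I : Set s, diffSet H I
      = ((Subtype.val '' I).ncard : ℤ) - ((nbhd G (Subtype.val '' I)) \ {v}).ncard := by
    intro I
    have h1 : I.ncard = (Subtype.val '' I).ncard :=
      (Set.ncard_image_of_injective I Subtype.val_injective).symm
    have h2 : (nbhd H I).ncard = ((nbhd G (Subtype.val '' I)) \ {v}).ncard := by
      rw [hH, nbhd_induce]
      rw [← Set.ncard_image_of_injective _ (Subtype.val_injective (p := (· ∈ s)))]
      congr 1
      rw [Subtype.image_preimage_coe]
      ext x
      simp only [hs, Set.mem_inter_iff, Set.mem_compl_iff, Set.mem_singleton_iff,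
        Set.mem_diff]
      tauto
    unfold diffSet
    rw [h1, h2]
  -- upper bound : every independent set of H has difference ≤ critDiff G
  have hupper : ∀ I : Set s, IsIndep H I → diffSet H I ≤ critDiff G := by
    intro I hI
    set J := Subtype.val '' I with hJ
    have hJindep : IsIndep G J := (indep_induce_iff G s I).mp hI
    have hJd : diffSet G J ≤ critDiff G := diff_le_critDiff G hJindep
    rw [hdiffH I, ← hJ]
    by_cases hvJ : v ∈ nbhd G J
    · -- then diffSet G J < critDiff G
      have hlt : diffSet G J ≠ critDiff G := by
        intro heq
        exact core_not_nbhd G hvcore ⟨hJindep, heq⟩ hvJ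
      have hcard : ((nbhd G J \ {v}).ncard : ℤ) + 1 = (nbhd G J).ncard := by
        have := ncard_diff_add_inter' (nbhd G J) {v}
        have hint : nbhd G J ∩ {v} = {v} := by
          ext x
          simp only [Set.mem_inter_iff, Set.mem_singleton_iff]
          exact ⟨fun h => h.2, fun h => ⟨h ▸ hvJ, h⟩⟩
        rw [hint, Set.ncard_singleton] at this
        exact_mod_cast this
      have : diffSet G J ≤ critDiff G - 1 := by
        rcases lt_or_eq_of_le hJd with h | h
        · omega
        · exact absurd h hlt
      unfold diffSet at this
      omega
    · have : nbhd G J \ {v} = nbhd G J := by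
        ext x
        simp only [Set.mem_diff, Set.mem_singleton_iff, and_iff_left_iff_imp]
        rintro hx rfl
        exact hvJ hx
      rw [this]
      exact hJd
  -- the preimage of ker attains critDiff G
  have hKindep : IsIndep H (Subtype.val ⁻¹' kerSet G) := by
    rw [hH, indep_induce_iff, himg]
    exact hKc.1
  have hKdiff : diffSet H (Subtype.val ⁻¹' kerSet G) = critDiff G := by
    rw [hdiffH, himg]
    have : nbhd G (kerSet G) \ {v} = nbhd G (kerSet G) := by
      ext x
      simp only [Set.mem_diff, Set.mem_singleton_iff, and_iff_left_iff_imp]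
      rintro hx rfl
      exact hvN hx
    rw [this]
    exact hKc.2
  have hcd : critDiff H = critDiff G := by
    apply le_antisymm
    · apply csSup_le (diff_set_nonempty H)
      rintro d ⟨I, hI, rfl⟩
      exact hupper I hI
    · rw [← hKdiff]
      exact diff_le_critDiff H hKindep
  exact ⟨⟨hKindep, by rw [hcd]; exact hKdiff⟩, hcd⟩
end
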